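/- arXiv:1702.00870 — 3 statements merged into one kernel-verified Lean document; each statement's English description precedes it below -/
import Mathlib

section
/- Let a, b > 0 and let f(t) = 2·a·t·cos(b·t) on the interval [0, π/(2b)]. Then f attains its maximum on [0, π/(2b)] at the unique point t̄ = τ/b, where τ is the unique root of τ·tan(τ) = 1 in (0, π/2), and the maximum value equals (2a/b)·τ·cos(τ). -/
/-!
After the substitution `x = b t` the function is `(2a/b) · x cos x` on `[0, π/2]`. The
derivative `cos x - x sin x` of `x cos x` is strictly decreasing there, and `τ tan τ = 1` says
exactly that it vanishes at `τ`; so `x cos x` increases strictly up to `τ` and decreases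
strictly after it.
-/

open Real Set

lemma hasDerivAt_mul_cos (x : ℝ) : HasDerivAt (fun x => x * cos x) (cos x - x * sin x) x :=
  ((hasDerivAt_id' x).mul (hasDerivAt_cos x)).congr_deriv (by ring)

lemma strictAntiOn_cos_sub_mul_sin :
    StrictAntiOn (fun x => cos x - x * sin x) (Icc 0 (π / 2)) := by
  intro x ⟨hx0, hx⟩ y ⟨hy0, hy⟩ hxy
  have hcos : cos y < cos x := cos_lt_cos_of_nonneg_of_le_pi hx0 (by linarith [pi_pos]) hxy
  have hsin : sin x ≤ sin y := sin_le_sin_of_le_of_le_pi_div_two (by linarith [pi_pos]) hy hxy.le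
  have hsin0 : 0 ≤ sin x := sin_nonneg_of_nonneg_of_le_pi hx0 (by linarith [pi_pos])
  have : x * sin x ≤ y * sin y := mul_le_mul hxy.le hsin hsin0 hy0
  dsimp only
  linarith

lemma mul_sin_eq_cos_of_mul_tan_eq_one {τ : ℝ} (hcos : cos τ ≠ 0) (hroot : τ * tan τ = 1) :
    τ * sin τ = cos τ := by
  rwa [tan_eq_sin_div_cos, mul_div_assoc', div_eq_one_iff_eq hcos] at hroot

section CriticalPoint

variable {τ : ℝ} (hτ : τ ∈ Ioo 0 (π / 2)) (hcrit : τ * sin τ = cos τ)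
include hτ hcrit

lemma strictMonoOn_mul_cos_Icc_zero : StrictMonoOn (fun x => x * cos x) (Icc 0 τ) := by
  refine strictMonoOn_of_deriv_pos (convex_Icc _ _) (by fun_prop) fun x hx => ?_
  rw [interior_Icc] at hx
  have hτmem : τ ∈ Icc 0 (π / 2) := Ioo_subset_Icc_self hτ
  have hxmem : x ∈ Icc 0 (π / 2) := ⟨hx.1.le, hx.2.le.trans hτmem.2⟩
  rw [(hasDerivAt_mul_cos x).deriv]
  linarith [strictAntiOn_cos_sub_mul_sin hxmem hτmem hx.2]

lemma strictAntiOn_mul_cos_Icc_pi_div_two :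
    StrictAntiOn (fun x => x * cos x) (Icc τ (π / 2)) := by
  refine strictAntiOn_of_deriv_neg (convex_Icc _ _) (by fun_prop) fun x hx => ?_
  rw [interior_Icc] at hx
  have hτmem : τ ∈ Icc 0 (π / 2) := Ioo_subset_Icc_self hτ
  have hxmem : x ∈ Icc 0 (π / 2) := ⟨hτ.1.le.trans hx.1.le, hx.2.le⟩
  rw [(hasDerivAt_mul_cos x).deriv]
  linarith [strictAntiOn_cos_sub_mul_sin hτmem hxmem hx.1]

lemma mul_cos_lt_of_ne {x : ℝ} (hx : x ∈ Icc 0 (π / 2)) (hne : x ≠ τ) :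
    x * cos x < τ * cos τ := by
  rcases hne.lt_or_gt with hlt | hgt
  · exact strictMonoOn_mul_cos_Icc_zero hτ hcrit ⟨hx.1, hlt.le⟩ ⟨hτ.1.le, le_rfl⟩ hlt
  · exact strictAntiOn_mul_cos_Icc_pi_div_two hτ hcrit ⟨le_rfl, hτ.2.le⟩ ⟨hgt.le, hx.2⟩
      hgt

end CriticalPoint

lemma mul_mem_Icc_pi_div_two {b t : ℝ} (hb : 0 < b) (ht : t ∈ Icc 0 (π / (2 * b))) :
    b * t ∈ Icc 0 (π / 2) := by
  refine ⟨mul_nonneg hb.le ht.1, ?_⟩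
  calc b * t ≤ b * (π / (2 * b)) := mul_le_mul_of_nonneg_left ht.2 hb.le
    _ = π / 2 := by field_simp

lemma two_mul_mul_cos_lt {a b τ t : ℝ} (ha : 0 < a) (hb : 0 < b) (hτ : τ ∈ Ioo 0 (π / 2))
    (hcrit : τ * sin τ = cos τ) (ht : t ∈ Icc 0 (π / (2 * b))) (hne : t ≠ τ / b) :
    2 * a * t * cos (b * t) < 2 * a * (τ / b) * cos (b * (τ / b)) := by
  have hbt : b * t ≠ τ := fun h => hne (by rw [← h]; field_simp)
  have hlt := mul_cos_lt_of_ne hτ hcrit (mul_mem_Icc_pi_div_two hb ht) hbt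
  have hscale : ∀ x, 2 * a * x * cos (b * x) = 2 * a / b * (b * x * cos (b * x)) := fun x => by
    field_simp
  rw [hscale, hscale, mul_div_cancel₀ τ hb.ne']
  exact mul_lt_mul_of_pos_left hlt (by positivity)

/-- For `a, b > 0`, the rectangle-energy function `f t = 2·a·t·cos (b·t)` attains its
maximum on `[0, π/(2b)]` at the unique point `t̄ = τ/b`, where `τ` is the unique root
of `τ·tan τ = 1` in `(0, π/2)`, and the maximum value is `(2a/b)·τ·cos τ`. -/
theorem stmt_2 (a b τ : ℝ) (ha : 0 < a) (hb : 0 < b)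
    (hτ : τ ∈ Set.Ioo 0 (Real.pi / 2)) (hroot : τ * Real.tan τ = 1) :
    IsMaxOn (fun t : ℝ => 2 * a * t * Real.cos (b * t))
      (Set.Icc 0 (Real.pi / (2 * b))) (τ / b) ∧
    (∀ t : ℝ, t ∈ Set.Icc 0 (Real.pi / (2 * b)) →
      IsMaxOn (fun s : ℝ => 2 * a * s * Real.cos (b * s))
        (Set.Icc 0 (Real.pi / (2 * b))) t → t = τ / b) ∧
    2 * a * (τ / b) * Real.cos (b * (τ / b)) = (2 * a / b) * τ * Real.cos τ := by
  have hcos : cos τ ≠ 0 := (cos_pos_of_mem_Ioo ⟨by linarith [hτ.1, pi_pos], hτ.2⟩).ne'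
  have hlt := fun t => @two_mul_mul_cos_lt a b τ t ha hb hτ
    (mul_sin_eq_cos_of_mul_tan_eq_one hcos hroot)
  have hτmem : τ / b ∈ Icc 0 (π / (2 * b)) := by
    rw [← div_div]
    exact ⟨div_nonneg hτ.1.le hb.le, div_le_div_of_nonneg_right hτ.2.le hb.le⟩
  refine ⟨isMaxOn_iff.2 fun t ht => ?_, fun t ht hmax => ?_,
    by rw [mul_div_cancel₀ τ hb.ne']; ring⟩
  · rcases eq_or_ne t (τ / b) with rfl | hne
    · exact le_rfl
    · exact (hlt t ht hne).le
  · by_contra hne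
    exact (hlt t ht hne).not_ge (hmax hτmem)
end

section
/- With g = arccos, the quantity 0.2727·(g(0.2727) − g(0.5758) + g(0.2727 + 0.5758)) + 0.5758·g(0.5758) is strictly greater than 0.79. (Thus the two-load configuration with normalized sizes y₁ = 0.2727 and y₂ = 0.5758 achieves solar utilization above 79% on the normalized clear-sky cosine day.) -/
/-!
After collecting terms, `arccos 0.5758` has coefficient `0.5758 - 0.2727 > 0`, so lower bounds
on the three arccos values suffice. Each is obtained from an angle `a` with `q < cos a`; to
certify `cos a` to the needed accuracy, start from `1 - x²/2 ≤ cos x` at `x = a/8` (error about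
`x⁴/24`) and apply the double-angle formula `cos 2x = 2 cos² x - 1` three times.
-/

open Real

def doubleAngle (c : ℝ) : ℝ := 2 * c ^ 2 - 1

lemma doubleAngle_le_cos_two_mul {x c : ℝ} (hc : 0 ≤ c) (h : c ≤ cos x) :
    doubleAngle c ≤ cos (2 * x) := by
  rw [cos_two_mul, doubleAngle]
  nlinarith

lemma doubleAngle_iterate_le_cos (n : ℕ) (x : ℝ)
    (hnonneg : ∀ k < n, 0 ≤ doubleAngle^[k] (1 - (x / 2 ^ n) ^ 2 / 2)) :
    doubleAngle^[n] (1 - (x / 2 ^ n) ^ 2 / 2) ≤ cos x := by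
  induction n generalizing x with
  | zero => simpa using one_sub_sq_div_two_le_cos
  | succ n ih =>
    have hx : x / 2 ^ (n + 1) = x / 2 / 2 ^ n := by ring
    rw [hx] at hnonneg ⊢
    rw [Function.iterate_succ_apply']
    calc doubleAngle (doubleAngle^[n] (1 - (x / 2 / 2 ^ n) ^ 2 / 2))
        ≤ cos (2 * (x / 2)) := doubleAngle_le_cos_two_mul (hnonneg n n.lt_succ_self)
          (ih (x / 2) fun k hk => hnonneg k (hk.trans n.lt_succ_self))
      _ = cos x := by ring_nf

lemma lt_arccos_of_lt_cos {a q : ℝ} (ha₀ : 0 ≤ a) (haπ : a ≤ π) (hq : -1 ≤ q)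
    (h : q < cos a) : a < arccos q :=
  arccos_cos ha₀ haπ ▸ arccos_lt_arccos hq h (cos_le_one a)

lemma lt_arccos_of_lt_doubleAngle_iterate {a q : ℝ} (n : ℕ) (ha₀ : 0 ≤ a) (haπ : a ≤ π)
    (hq : -1 ≤ q) (hnonneg : ∀ k < n, 0 ≤ doubleAngle^[k] (1 - (a / 2 ^ n) ^ 2 / 2))
    (h : q < doubleAngle^[n] (1 - (a / 2 ^ n) ^ 2 / 2)) : a < arccos q :=
  lt_arccos_of_lt_cos ha₀ haπ hq (h.trans_le (doubleAngle_iterate_le_cos n a hnonneg))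

lemma doubleAngle_le_doubleAngle {c d : ℝ} (hc : 0 ≤ c) (h : c ≤ d) :
    doubleAngle c ≤ doubleAngle d := by
  unfold doubleAngle
  nlinarith

lemma lt_arccos_of_lt_doubleAngle_iterate_three {a q : ℝ} (ha₀ : 0 ≤ a) (ha : a ≤ 3)
    (hq : -1 ≤ q) (h : q < doubleAngle^[3] (1 - (a / 8) ^ 2 / 2)) : a < arccos q := by
  have hc : 119 / 128 ≤ 1 - (a / 8) ^ 2 / 2 := by nlinarith
  have hc₁ := doubleAngle_le_doubleAngle (by norm_num) hc
  have hc₂ := doubleAngle_le_doubleAngle (by norm_num [doubleAngle]) hc₁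
  have h8 : a / 2 ^ 3 = a / 8 := by norm_num
  refine lt_arccos_of_lt_doubleAngle_iterate 3 ha₀ (ha.trans pi_gt_three.le) hq ?_ (h8 ▸ h)
  intro k hk
  rw [h8]
  interval_cases k
  · exact le_trans (by norm_num) hc
  · exact le_trans (by norm_num [doubleAngle]) hc₁
  · exact le_trans (by norm_num [doubleAngle]) hc₂

/-- The two-load configuration with normalized sizes `y₁ = 0.2727` and `y₂ = 0.5758`
achieves solar utilization above `0.79` on the normalized clear-sky cosine day. -/
theorem stmt_8 :
    (0.79 : ℝ) <
      0.2727 * (Real.arccos 0.2727 - Real.arccos 0.5758 +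
        Real.arccos (0.2727 + 0.5758)) + 0.5758 * Real.arccos 0.5758 := by
  have h₁ : (1.29 : ℝ) < arccos 0.2727 :=
    lt_arccos_of_lt_doubleAngle_iterate_three (by norm_num) (by norm_num) (by norm_num)
      (by norm_num [doubleAngle])
  have h₂ : (0.955 : ℝ) < arccos 0.5758 :=
    lt_arccos_of_lt_doubleAngle_iterate_three (by norm_num) (by norm_num) (by norm_num)
      (by norm_num [doubleAngle])
  have h₃ : (0.556 : ℝ) < arccos (0.2727 + 0.5758) :=
    lt_arccos_of_lt_doubleAngle_iterate_three (by norm_num) (by norm_num) (by norm_num)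
      (by norm_num [doubleAngle])
  linarith
end

section
/- With g = arccos, the two-load utilization value 0.2727·(g(0.2727) − g(0.5758) + g(0.2727 + 0.5758)) + 0.5758·g(0.5758) strictly exceeds the supremum over y ∈ [0, 1] of y·arccos(y). (Thus on a normalized clear-sky cosine day, an optimally sized pair of on/off loads strictly outperforms the best possible single on/off load in solar utilization.) -/
/-!
Since `arcsin y ≥ y` on `[0, 1]`, a single load gives `y · arccos y ≤ y (π/2 - y) ≤ π²/16 < 0.63`.
Conversely `cos t ≥ 1 - t²/2` gives `arccos x ≥ √(2(1 - x))`, so `arccos 0.2727 ≥ 1.2`,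
`arccos 0.5758 ≥ 0.9` and `arccos 0.8485 ≥ 0.55`; as the two-load value equals
`a · arccos a + (b - a) · arccos b + a · arccos (a + b)` with positive coefficients, it is at least `0.75`.
-/

open Real

theorem arccos_le_pi_div_two_sub {x : ℝ} (hx₀ : 0 ≤ x) (hx₁ : x ≤ 1) : arccos x ≤ π / 2 - x := by
  have hx : x ≤ arcsin x := by
    calc x = sin (arcsin x) := (sin_arcsin (by linarith) hx₁).symm
      _ ≤ arcsin x := sin_le (arcsin_nonneg.2 hx₀)
  rw [arccos_eq_pi_div_two_sub_arcsin]
  linarith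

theorem mul_arccos_le_pi_sq_div_sixteen {x : ℝ} (hx₀ : 0 ≤ x) (hx₁ : x ≤ 1) :
    x * arccos x ≤ π ^ 2 / 16 :=
  calc x * arccos x ≤ x * (π / 2 - x) :=
        mul_le_mul_of_nonneg_left (arccos_le_pi_div_two_sub hx₀ hx₁) hx₀
    _ ≤ π ^ 2 / 16 := by nlinarith [sq_nonneg (x - π / 4)]

theorem sqrt_two_mul_one_sub_le_arccos {x : ℝ} (hx : -1 ≤ x) : √(2 * (1 - x)) ≤ arccos x := by
  refine Real.sqrt_le_iff.2 ⟨arccos_nonneg x, ?_⟩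
  rcases le_or_gt x 1 with hx₁ | hx₁
  · have h := one_sub_sq_div_two_le_cos (x := arccos x)
    rw [cos_arccos hx hx₁] at h
    linarith
  · nlinarith

theorem le_arccos_of_sq_le {t x : ℝ} (hx : -1 ≤ x) (h : t ^ 2 ≤ 2 * (1 - x)) : t ≤ arccos x :=
  (Real.le_sqrt_of_sq_le h).trans (sqrt_two_mul_one_sub_le_arccos hx)

/-- The two-load utilization with sizes `0.2727` and `0.5758` strictly exceeds the
best single-load utilization `sup_{y ∈ [0,1]} y · arccos y`. -/
theorem stmt_9 :
    sSup ((fun y : ℝ => y * Real.arccos y) '' Set.Icc (0 : ℝ) 1) <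
      0.2727 * (Real.arccos 0.2727 - Real.arccos 0.5758 +
        Real.arccos (0.2727 + 0.5758)) + 0.5758 * Real.arccos 0.5758 := by
  have hsup : sSup ((fun y : ℝ => y * arccos y) '' Set.Icc (0 : ℝ) 1) ≤ π ^ 2 / 16 := by
    refine Real.sSup_le ?_ (by positivity)
    rintro _ ⟨y, ⟨hy₀, hy₁⟩, rfl⟩
    exact mul_arccos_le_pi_sq_div_sixteen hy₀ hy₁
  have hpi : π ^ 2 / 16 < 0.63 := by nlinarith [mul_self_lt_mul_self pi_pos.le pi_lt_d2]
  have ha : (1.2 : ℝ) ≤ arccos 0.2727 := le_arccos_of_sq_le (by norm_num) (by norm_num)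
  have hb : (0.9 : ℝ) ≤ arccos 0.5758 := le_arccos_of_sq_le (by norm_num) (by norm_num)
  have hab : (0.55 : ℝ) ≤ arccos (0.2727 + 0.5758) :=
    le_arccos_of_sq_le (by norm_num) (by norm_num)
  linarith
end
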